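/- arXiv:2512.01736 — 6 statements merged into one kernel-verified Lean document; each statement's English description precedes it below -/
import Mathlib

section
/- Let Γ be a signed graph with m edges and balanced clique number ω_b(Γ) ≥ 2, and suppose λ₁(Γ) ≥ |λ_n(Γ)| where λ₁ ≥ ⋯ ≥ λ_n are the adjacency eigenvalues. Then λ₁(Γ)² ≤ 2m·(ω_b(Γ)−1)/ω_b(Γ). -/
/-!
Take an eigenvector `x` for `λ₁ ≥ 0` and switch `Γ` by the sign pattern of `x`; let `P` be the
graph of edges that become positive. Then `λ₁ ‖x‖² = xᵀ A x ≤ |x|ᵀ A(P) |x|`, and every clique of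
`P` is a balanced clique of `Γ`, so `P` has no clique on `ω_b + 1` vertices. Cauchy–Schwarz over
the ordered edges of `P` gives `(|x|ᵀ A(P) |x|)² ≤ 2 e(P) · (x²)ᵀ A(P) x²`, and the
Motzkin–Straus inequality bounds the last form by `(1 - 1/ω_b) ‖x‖⁴`.
-/

open Matrix Polynomial Finset

theorem sq_sum_le_card_support_mul_sum_sq {ι : Type*} [Fintype ι] (y : ι → ℝ) :
    (∑ i, y i) ^ 2 ≤ #{i | y i ≠ 0} * ∑ i, y i ^ 2 := by
  calc (∑ i, y i) ^ 2 = (∑ i with y i ≠ 0, y i) ^ 2 := by rw [sum_filter_ne_zero]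
    _ ≤ #{i | y i ≠ 0} * ∑ i with y i ≠ 0, y i ^ 2 := sq_sum_le_card_mul_sum_sq
    _ = #{i | y i ≠ 0} * ∑ i, y i ^ 2 := by
      rw [sum_filter_of_ne fun i _ h => by simpa using h]

theorem Matrix.isRoot_charpoly_of_eq_prod {n K : Type*} [Fintype n] [DecidableEq n] [Field K]
    {A : Matrix n n K} {μ : n → K} (h : A.charpoly = ∏ i, (X - C (μ i))) (i : n) :
    A.charpoly.IsRoot (μ i) := by
  rw [h, IsRoot, eval_prod]
  exact prod_eq_zero (mem_univ i) (by simp)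

theorem Matrix.exists_mulVec_eq_smul_of_isRoot_charpoly {n K : Type*} [Fintype n] [DecidableEq n]
    [Field K] {A : Matrix n n K} {t : K} (h : A.charpoly.IsRoot t) :
    ∃ v ≠ 0, A *ᵥ v = t • v := by
  have : Module.End.HasEigenvalue (toLin' A) t := by
    rw [Module.End.hasEigenvalue_iff_mem_spectrum, spectrum_toLin']
    exact mem_spectrum_iff_isRoot_charpoly.mpr h
  obtain ⟨v, hv⟩ := this.exists_hasEigenvector
  exact ⟨v, hv.2, hv.apply_eq_smul⟩

namespace SimpleGraph

theorem IsClique.card_le_of_cliqueFree {V : Type*} {H : SimpleGraph V} {K : ℕ}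
    (hK : H.CliqueFree (K + 1)) {s : Finset V} (hs : H.IsClique (s : Set V)) : #s ≤ K := by
  by_contra! h
  obtain ⟨t, hts, ht⟩ := exists_subset_card_eq h
  exact hK t ⟨hs.subset (by simpa using hts), ht⟩

section Unsigned

variable {V : Type*} [Fintype V] [DecidableEq V] (H : SimpleGraph V) [DecidableRel H.Adj]

theorem adjMatrix_form_add_smul_single_sub_single {α : Type*} [CommRing α] {u v : V}
    (huv : ¬H.Adj u v) (y : V → α) (t : α) :
    (y + t • (Pi.single u 1 - Pi.single v 1)) ⬝ᵥ
        H.adjMatrix α *ᵥ (y + t • (Pi.single u 1 - Pi.single v 1)) =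
      y ⬝ᵥ H.adjMatrix α *ᵥ y + 2 * t * ((H.adjMatrix α *ᵥ y) u - (H.adjMatrix α *ᵥ y) v) := by
  set d : V → α := Pi.single u 1 - Pi.single v 1
  set M := H.adjMatrix α
  have hsymm : y ⬝ᵥ M *ᵥ d = d ⬝ᵥ M *ᵥ y := by
    rw [dotProduct_mulVec, ← mulVec_transpose, transpose_adjMatrix, dotProduct_comm]
  have hdy : d ⬝ᵥ M *ᵥ y = (M *ᵥ y) u - (M *ᵥ y) v := by
    simp only [d, sub_dotProduct, single_one_dotProduct]
  have hdd : d ⬝ᵥ M *ᵥ d = 0 := by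
    simp [d, M, mulVec_sub, adjMatrix_apply, huv, adj_comm]
  simp only [mulVec_add, mulVec_smul, add_dotProduct, dotProduct_add, smul_dotProduct,
    dotProduct_smul, hsymm, hdd, hdy, smul_eq_mul]
  ring

/-- Along `e_u - e_v` the form is affine when `u`, `v` are not adjacent, so moving all the weight of
one of them onto the other, in the direction of larger weighted degree, does not decrease it. -/
theorem exists_adjMatrix_form_le_of_not_adj {y : V → ℝ} (hy : 0 ≤ y) {u v : V} (hu : y u ≠ 0)
    (hv : y v ≠ 0) (hne : u ≠ v) (huv : ¬H.Adj u v) :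
    ∃ y' : V → ℝ, 0 ≤ y' ∧ ∑ i, y' i = ∑ i, y i ∧ #{i | y' i ≠ 0} < #{i | y i ≠ 0} ∧
      y ⬝ᵥ H.adjMatrix ℝ *ᵥ y ≤ y' ⬝ᵥ H.adjMatrix ℝ *ᵥ y' := by
  wlog hle : (H.adjMatrix ℝ *ᵥ y) v ≤ (H.adjMatrix ℝ *ᵥ y) u generalizing u v
  · exact this hv hu hne.symm (fun h => huv h.symm) (not_le.mp hle).le
  set y' := y + y v • (Pi.single u 1 - Pi.single v 1)
  have hy'u : y' u = y u + y v := by simp [y', hne]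
  have hy'v : y' v = 0 := by simp [y', hne.symm]
  have hy'ne : ∀ i, i ≠ u → i ≠ v → y' i = y i := fun i hiu hiv => by simp [y', hiu, hiv]
  refine ⟨y', fun i => ?_, ?_, ?_, ?_⟩
  · by_cases hiu : i = u
    · rw [hiu, hy'u]
      exact add_nonneg (hy u) (hy v)
    by_cases hiv : i = v
    · exact hiv ▸ hy'v.ge
    exact hy'ne i hiu hiv ▸ hy i
  · simp [y', sum_add_distrib, ← mul_sum]
  · refine card_lt_card
      ⟨fun i hi => ?_, fun h => (by simpa using h (by simpa using hv) : y' v ≠ 0) hy'v⟩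
    simp only [mem_filter, mem_univ, true_and] at hi ⊢
    by_cases hiu : i = u
    · exact hiu ▸ hu
    by_cases hiv : i = v
    · exact absurd (hiv ▸ hy'v) hi
    rwa [← hy'ne i hiu hiv]
  · rw [adjMatrix_form_add_smul_single_sub_single H huv]
    have := mul_nonneg (hy v) (sub_nonneg.mpr hle)
    linarith

theorem adjMatrix_form_le_sq_sum_sub_sum_sq {y : V → ℝ} (hy : 0 ≤ y) :
    y ⬝ᵥ H.adjMatrix ℝ *ᵥ y ≤ (∑ i, y i) ^ 2 - ∑ i, y i ^ 2 := by
  have : (∑ i, y i) ^ 2 - ∑ i, y i ^ 2 = ∑ i, ∑ j, if i = j then 0 else y i * y j := by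
    rw [sq, sum_mul_sum, ← sum_sub_distrib]
    refine sum_congr rfl fun i _ => ?_
    rw [sum_ite, sum_const_zero, zero_add, filter_ne, sum_erase_eq_sub (mem_univ i), sq]
  rw [this, dotProduct_mulVec_adjMatrix]
  gcongr with i _ j _
  split_ifs with h₁ h₂
  · exact absurd (h₂ ▸ h₁) H.irrefl
  · exact le_rfl
  · simp
  · exact mul_nonneg (hy i) (hy j)

/-- The Motzkin–Straus inequality. -/
theorem adjMatrix_form_le_of_cliqueFree {K : ℕ} (hK : H.CliqueFree (K + 1)) {y : V → ℝ}
    (hy : 0 ≤ y) : y ⬝ᵥ H.adjMatrix ℝ *ᵥ y ≤ (1 - 1 / K) * (∑ i, y i) ^ 2 := by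
  induction hN : #{i | y i ≠ 0} using Nat.strong_induction_on generalizing y with
  | _ N ih =>
  by_cases hclique : H.IsClique (({i | y i ≠ 0} : Finset V) : Set V)
  · have hsq : (∑ i, y i) ^ 2 / K ≤ ∑ i, y i ^ 2 := by
      rcases K.eq_zero_or_pos with rfl | hKpos
      · simpa using sum_nonneg fun i _ => sq_nonneg (y i)
      have hcard : (#{i | y i ≠ 0} : ℝ) ≤ K := by
        exact_mod_cast hclique.card_le_of_cliqueFree hK
      rw [div_le_iff₀ (by positivity), mul_comm]
      exact (sq_sum_le_card_support_mul_sum_sq y).trans (by gcongr)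
    calc y ⬝ᵥ H.adjMatrix ℝ *ᵥ y ≤ (∑ i, y i) ^ 2 - ∑ i, y i ^ 2 :=
          H.adjMatrix_form_le_sq_sum_sub_sum_sq hy
      _ ≤ (1 - 1 / K) * (∑ i, y i) ^ 2 := by rw [sub_mul, one_mul, one_div_mul_eq_div]; linarith
  · obtain ⟨u, hu, v, hv, hne, huv⟩ :
        ∃ u, y u ≠ 0 ∧ ∃ v, y v ≠ 0 ∧ u ≠ v ∧ ¬H.Adj u v := by
      simpa [IsClique, Set.Pairwise] using hclique
    obtain ⟨y', hy', hsum, hlt, hle⟩ := H.exists_adjMatrix_form_le_of_not_adj hy hu hv hne huv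
    exact hle.trans (hsum ▸ ih _ (hN ▸ hlt) hy' rfl)

theorem sq_adjMatrix_form_le_of_cliqueFree {K : ℕ} (hK : H.CliqueFree (K + 1)) (z : V → ℝ) :
    (z ⬝ᵥ H.adjMatrix ℝ *ᵥ z) ^ 2 ≤ 2 * #H.edgeFinset * (1 - 1 / K) * (∑ i, z i ^ 2) ^ 2 := by
  have hcs : (z ⬝ᵥ H.adjMatrix ℝ *ᵥ z) ^ 2 ≤
      (1 ⬝ᵥ H.adjMatrix ℝ *ᵥ 1) * ((z ^ 2) ⬝ᵥ H.adjMatrix ℝ *ᵥ (z ^ 2)) := by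
    simp only [dotProduct_mulVec_adjMatrix, ← Fintype.sum_prod_type', Pi.one_apply, Pi.pow_apply]
    refine sum_sq_le_sum_mul_sum_of_sq_le_mul _ (fun _ _ => ?_) (fun _ _ => ?_) fun _ _ => ?_ <;>
      split_ifs <;> simp [mul_pow, mul_nonneg, sq_nonneg]
  have hedges : 1 ⬝ᵥ H.adjMatrix ℝ *ᵥ 1 = 2 * #H.edgeFinset := by
    rw [dotProduct_comm, ← natCast_card_dart_eq_dotProduct, dart_card_eq_twice_card_edges]
    push_cast; ring
  have hms := H.adjMatrix_form_le_of_cliqueFree hK (y := z ^ 2) fun i => sq_nonneg (z i)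
  rw [hedges] at hcs
  calc _ ≤ _ := hcs
    _ ≤ 2 * #H.edgeFinset * ((1 - 1 / K) * (∑ i, (z ^ 2) i) ^ 2) := by gcongr
    _ = _ := by simp only [Pi.pow_apply]; ring

end Unsigned

section Signed

variable {V : Type*} (G : SimpleGraph V) (σ : V → V → ℝ)

def signedAdjMatrix [DecidableRel G.Adj] : Matrix V V ℝ :=
  of fun i j => if G.Adj i j then σ i j else 0

/-- By Harary's balance theorem, a signed complete graph is balanced iff it is switched to the
all-positive signature by some `±1`-valued `θ`, i.e. `σ u v = θ u * θ v` on all of its edges. -/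
def IsBalancedClique (s : Finset V) : Prop :=
  G.IsClique (s : Set V) ∧ ∃ θ : V → ℝ, (∀ w, θ w = 1 ∨ θ w = -1) ∧
    ∀ u ∈ s, ∀ v ∈ s, G.Adj u v → σ u v = θ u * θ v

/-- The edges of `G` that are positive after switching `σ` by `θ`. -/
def switchingPositivePart (θ : V → ℝ) : SimpleGraph V :=
  G ⊓ fromRel fun i j => σ i j = θ i * θ j

variable {G σ}

theorem switchingPositivePart_le (θ : V → ℝ) : G.switchingPositivePart σ θ ≤ G :=
  inf_le_left

theorem switchingPositivePart_adj (hsym : ∀ i j, σ i j = σ j i) {θ : V → ℝ} {i j : V} :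
    (G.switchingPositivePart σ θ).Adj i j ↔ G.Adj i j ∧ σ i j = θ i * θ j := by
  simp only [switchingPositivePart, inf_adj, fromRel_adj]
  constructor
  · rintro ⟨hG, -, h | h⟩
    · exact ⟨hG, h⟩
    · exact ⟨hG, by rw [hsym, h, mul_comm]⟩
  · rintro ⟨hG, h⟩
    exact ⟨hG, hG.ne, Or.inl h⟩

theorem cliqueFree_switchingPositivePart (hsym : ∀ i j, σ i j = σ j i) {θ : V → ℝ}
    (hθ : ∀ w, θ w = 1 ∨ θ w = -1) {K : ℕ} (hK : ∀ s, G.IsBalancedClique σ s → #s ≤ K) :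
    (G.switchingPositivePart σ θ).CliqueFree (K + 1) := by
  intro s hs
  have hbal : G.IsBalancedClique σ s :=
    ⟨hs.isClique.mono (switchingPositivePart_le θ), θ, hθ, fun u hu v hv huv =>
      ((switchingPositivePart_adj hsym).mp (hs.isClique hu hv huv.ne)).2⟩
  have := hK s hbal
  rw [hs.card_eq] at this
  omega

/-- Switching by the sign pattern `θ` of `x` makes every term of `xᵀ A x` equal to
`± |x i| |x j|`, with the plus sign exactly on the positive part. -/
theorem signedAdjMatrix_form_le [Fintype V] [DecidableRel G.Adj]
    (hσ : ∀ i j, G.Adj i j → σ i j = 1 ∨ σ i j = -1) (hsym : ∀ i j, σ i j = σ j i) {θ : V → ℝ}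
    (hθ : ∀ i, θ i = 1 ∨ θ i = -1) {x : V → ℝ} (hx : ∀ i, |x i| = θ i * x i)
    [DecidableRel (G.switchingPositivePart σ θ).Adj] :
    x ⬝ᵥ G.signedAdjMatrix σ *ᵥ x ≤ |x| ⬝ᵥ (G.switchingPositivePart σ θ).adjMatrix ℝ *ᵥ |x| := by
  rw [dotProduct_mulVec_adjMatrix]
  simp only [dotProduct, mulVec, signedAdjMatrix, of_apply, mul_sum, Pi.abs_apply]
  gcongr with i _ j _
  by_cases hG : G.Adj i j
  · have hτ : x i * (σ i j * x j) = σ i j * θ i * θ j * (|x i| * |x j|) := by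
      rw [hx i, hx j]
      rcases hθ i with hi | hi <;> rcases hθ j with hj | hj <;> rw [hi, hj] <;> ring
    rw [if_pos hG, hτ]
    split_ifs with hP
    · rw [((switchingPositivePart_adj hsym).mp hP).2]
      rcases hθ i with hi | hi <;> rcases hθ j with hj | hj <;> simp [hi, hj]
    · have hne : σ i j ≠ θ i * θ j := fun h => hP ((switchingPositivePart_adj hsym).mpr ⟨hG, h⟩)
      have hneg : σ i j * θ i * θ j = -1 := by
        rcases hσ i j hG with hs | hs <;> rcases hθ i with hi | hi <;>
          rcases hθ j with hj | hj <;> simp_all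
      rw [hneg, neg_one_mul, neg_nonpos]
      exact mul_nonneg (abs_nonneg (x i)) (abs_nonneg (x j))
  · simp [hG, switchingPositivePart_adj hsym]

theorem sq_le_of_signedAdjMatrix_mulVec_eq_smul [Fintype V] [DecidableEq V] [DecidableRel G.Adj]
    (hσ : ∀ i j, G.Adj i j → σ i j = 1 ∨ σ i j = -1) (hsym : ∀ i j, σ i j = σ j i) {K : ℕ}
    (hK : ∀ s, G.IsBalancedClique σ s → #s ≤ K) {lam : ℝ} (hlam : 0 ≤ lam) {x : V → ℝ}
    (hx : x ≠ 0) (hAx : G.signedAdjMatrix σ *ᵥ x = lam • x) :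
    lam ^ 2 ≤ 2 * #G.edgeFinset * (1 - 1 / K) := by
  classical
  set θ : V → ℝ := fun i => if 0 ≤ x i then 1 else -1
  have hθ : ∀ i, θ i = 1 ∨ θ i = -1 := fun i => by by_cases h : 0 ≤ x i <;> simp [θ, h]
  have habs : ∀ i, |x i| = θ i * x i := fun i => by
    by_cases h : 0 ≤ x i
    · simp [θ, h, abs_of_nonneg h]
    · simp [θ, h, abs_of_neg (not_le.mp h)]
  set P := G.switchingPositivePart σ θ
  have hq : 0 < x ⬝ᵥ x := (sum_nonneg fun i _ => mul_self_nonneg (x i)).lt_of_ne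
    (Ne.symm (dotProduct_self_eq_zero.not.mpr hx))
  have hform : lam * (x ⬝ᵥ x) ≤ |x| ⬝ᵥ P.adjMatrix ℝ *ᵥ |x| := by
    calc lam * (x ⬝ᵥ x) = x ⬝ᵥ G.signedAdjMatrix σ *ᵥ x := by
          rw [hAx, dotProduct_smul, smul_eq_mul]
      _ ≤ _ := signedAdjMatrix_form_le hσ hsym hθ habs
  have hbound :=
    P.sq_adjMatrix_form_le_of_cliqueFree (cliqueFree_switchingPositivePart hsym hθ hK) |x|
  have hsq : ∑ i, |x| i ^ 2 = x ⬝ᵥ x := by simp [dotProduct, sq]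
  have hedges : (#P.edgeFinset : ℝ) ≤ #G.edgeFinset := by
    exact_mod_cast card_le_card (edgeFinset_mono (switchingPositivePart_le θ))
  have hK' : 0 ≤ 1 - 1 / (K : ℝ) := by
    rcases K.eq_zero_or_pos with rfl | hK
    · simp
    · exact sub_nonneg.mpr (div_le_one_of_le₀ (by exact_mod_cast hK) (Nat.cast_nonneg K))
  have : lam ^ 2 * (x ⬝ᵥ x) ^ 2 ≤ 2 * #G.edgeFinset * (1 - 1 / K) * (x ⬝ᵥ x) ^ 2 := by
    calc lam ^ 2 * (x ⬝ᵥ x) ^ 2 = (lam * (x ⬝ᵥ x)) ^ 2 := by ring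
      _ ≤ (|x| ⬝ᵥ P.adjMatrix ℝ *ᵥ |x|) ^ 2 := pow_le_pow_left₀ (by positivity) hform 2
      _ ≤ 2 * #P.edgeFinset * (1 - 1 / K) * (x ⬝ᵥ x) ^ 2 := hsq ▸ hbound
      _ ≤ 2 * #G.edgeFinset * (1 - 1 / K) * (x ⬝ᵥ x) ^ 2 := by gcongr
  exact le_of_mul_le_mul_right this (by positivity)

end Signed

end SimpleGraph

theorem stmt_3_general {n : ℕ} (hn : 0 < n) (G : SimpleGraph (Fin n)) [DecidableRel G.Adj]
    (σ : Fin n → Fin n → ℝ)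
    (hσ : ∀ i j, G.Adj i j → σ i j = 1 ∨ σ i j = -1)
    (hsym : ∀ i j, σ i j = σ j i)
    (A : Matrix (Fin n) (Fin n) ℝ)
    (hA : A = fun i j => if G.Adj i j then σ i j else 0)
    (μ : Fin n → ℝ)
    (hchar : A.charpoly = ∏ i, (X - C (μ i)))
    (ωb : ℕ) (hωb2 : 2 ≤ ωb)
    (hωb : IsGreatest {k : ℕ | ∃ s : Finset (Fin n), s.card = k ∧
      (∀ u ∈ s, ∀ v ∈ s, u ≠ v → G.Adj u v) ∧
      ∃ θ : Fin n → ℝ, (∀ w, θ w = 1 ∨ θ w = -1) ∧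
        ∀ u ∈ s, ∀ v ∈ s, G.Adj u v → σ u v = θ u * θ v} ωb)
    (hlam : |μ ⟨n - 1, Nat.sub_lt hn one_pos⟩| ≤ μ ⟨0, hn⟩) :
    (μ ⟨0, hn⟩) ^ 2 ≤ 2 * (G.edgeFinset.card : ℝ) * ((ωb : ℝ) - 1) / ωb := by
  subst hA
  obtain ⟨x, hx, hAx⟩ :=
    exists_mulVec_eq_smul_of_isRoot_charpoly (isRoot_charpoly_of_eq_prod hchar ⟨0, hn⟩)
  have hbound := G.sq_le_of_signedAdjMatrix_mulVec_eq_smul hσ hsym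
    (fun s hs => hωb.2 ⟨s, rfl, hs.1, hs.2⟩) ((abs_nonneg _).trans hlam) hx hAx
  have hωb0 : (ωb : ℝ) ≠ 0 := Nat.cast_ne_zero.mpr (by omega)
  rwa [mul_div_assoc, sub_div, div_self hωb0]

/-- If λ₁(Γ) ≥ |λₙ(Γ)|, then λ₁(Γ)² ≤ 2m(ω_b − 1)/ω_b, where ω_b is the
balanced clique number of the signed graph Γ. -/
theorem stmt_3 {n : ℕ} (hn : 0 < n) (G : SimpleGraph (Fin n)) [DecidableRel G.Adj]
    (σ : Fin n → Fin n → ℝ)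
    (hσ : ∀ i j, G.Adj i j → σ i j = 1 ∨ σ i j = -1)
    (hsym : ∀ i j, σ i j = σ j i)
    (A : Matrix (Fin n) (Fin n) ℝ)
    (hA : A = fun i j => if G.Adj i j then σ i j else 0)
    (μ : Fin n → ℝ) (hmono : Antitone μ)
    (hchar : A.charpoly = ∏ i, (X - C (μ i)))
    (ωb : ℕ) (hωb2 : 2 ≤ ωb)
    (hωb : IsGreatest {k : ℕ | ∃ s : Finset (Fin n), s.card = k ∧
      (∀ u ∈ s, ∀ v ∈ s, u ≠ v → G.Adj u v) ∧
      ∃ θ : Fin n → ℝ, (∀ w, θ w = 1 ∨ θ w = -1) ∧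
        ∀ u ∈ s, ∀ v ∈ s, G.Adj u v → σ u v = θ u * θ v} ωb)
    (hlam : |μ ⟨n - 1, Nat.sub_lt hn one_pos⟩| ≤ μ ⟨0, hn⟩) :
    (μ ⟨0, hn⟩) ^ 2 ≤ 2 * (G.edgeFinset.card : ℝ) * ((ωb : ℝ) - 1) / ωb :=
  stmt_3_general hn G σ hσ hsym A hA μ hchar ωb hωb2 hωb hlam
end

section
/- Let Γ be a connected signed graph. Then det(L(Γ)) = 0 if and only if Γ is balanced. Equivalently, L(Γ) is positive definite if and only if Γ is unbalanced. -/
open Matrix Finset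

/-!
Twice the quadratic form of `L` is `∑_{i ~ j} (x i - σ i j * x j) ^ 2`, so `L` is positive
semidefinite and `L *ᵥ x = 0` exactly when `x i = σ i j * x j` along every edge. Such an `x` has
constant `|x|` on a connected graph, so if `x ≠ 0` then `x / x v` is a `±1` switching function
witnessing balance; conversely a switching function lies in the kernel. A positive semidefinite
matrix is positive definite iff it is nonsingular, which gives the second equivalence.
-/

namespace SimpleGraph

variable {V : Type*} (G : SimpleGraph V) (σ : V → V → ℝ)

def IsBalanced : Prop :=
  ∃ θ : V → ℝ, (∀ v, θ v = 1 ∨ θ v = -1) ∧ ∀ i j, G.Adj i j → σ i j = θ i * θ j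

variable {G} in
theorem Reachable.apply_eq_of_forall_adj {α : Type*} {f : V → α}
    (h : ∀ u v, G.Adj u v → f u = f v) {u v : V} (huv : G.Reachable u v) : f u = f v := by
  obtain ⟨p⟩ := huv
  induction p with
  | nil => rfl
  | cons hadj _ ih => exact (h _ _ hadj).trans ih

variable {G σ} in
theorem IsBalanced.exists_ne_zero_forall_adj [Nonempty V] (h : G.IsBalanced σ) :
    ∃ x : V → ℝ, x ≠ 0 ∧ ∀ i j, G.Adj i j → x i = σ i j * x j := by
  obtain ⟨θ, hθ, hσθ⟩ := h
  refine ⟨θ, fun h0 => ?_, fun i j hij => ?_⟩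
  · obtain ⟨v⟩ := ‹Nonempty V›
    rcases hθ v with hv | hv <;> simp [h0] at hv
  · rcases hθ j with hj | hj <;> simp [hσθ i j hij, hj]

variable {G σ} in
theorem Connected.isBalanced_of_forall_adj (hconn : G.Connected)
    (hσ : ∀ i j, G.Adj i j → σ i j ^ 2 = 1) {x : V → ℝ} (hx0 : x ≠ 0)
    (hx : ∀ i j, G.Adj i j → x i = σ i j * x j) : G.IsBalanced σ := by
  obtain ⟨v, hv⟩ : ∃ v, x v ≠ 0 := Function.ne_iff.mp hx0
  have hsq : ∀ u, x u ^ 2 = x v ^ 2 := fun u =>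
    (hconn.preconnected u v).apply_eq_of_forall_adj (f := fun w => x w ^ 2) fun a b hab => by
      rw [hx a b hab, mul_pow, hσ a b hab, one_mul]
  refine ⟨fun u => x u / x v, fun u => ?_, fun i j hij => ?_⟩
  · rw [div_eq_one_iff_eq hv, div_eq_iff hv, neg_one_mul]
    exact sq_eq_sq_iff_eq_or_eq_neg.mp (hsq u)
  · change σ i j = x i / x v * (x j / x v)
    rw [hx i j hij]
    field_simp
    linear_combination σ i j * (hsq j).symm

variable [Fintype V] [DecidableEq V] [DecidableRel G.Adj]

def signedLapMatrix : Matrix V V ℝ := fun i j =>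
  (if i = j then (G.degree i : ℝ) else 0) - (if G.Adj i j then σ i j else 0)

theorem signedLapMatrix_mulVec_apply (x : V → ℝ) (i : V) :
    (G.signedLapMatrix σ *ᵥ x) i = ∑ j, if G.Adj i j then x i - σ i j * x j else 0 := by
  have hdeg : (G.degree i : ℝ) * x i = ∑ j, if G.Adj i j then x i else 0 := by
    rw [degree_eq_sum_if_adj, sum_mul]
    simp only [ite_mul, one_mul, zero_mul]
  simp only [signedLapMatrix, mulVec, dotProduct, sub_mul, ite_mul, zero_mul]
  rw [sum_sub_distrib, sum_ite_eq, if_pos (mem_univ i), hdeg, ← sum_sub_distrib]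
  simp only [ite_sub_ite, sub_zero]

theorem dotProduct_signedLapMatrix_mulVec (x : V → ℝ) :
    x ⬝ᵥ (G.signedLapMatrix σ *ᵥ x) =
      ∑ i, ∑ j, if G.Adj i j then x i * (x i - σ i j * x j) else 0 := by
  simp only [dotProduct, signedLapMatrix_mulVec_apply, mul_sum, mul_ite, mul_zero]

variable {σ}

theorem two_mul_dotProduct_signedLapMatrix_mulVec (hσ : ∀ i j, G.Adj i j → σ i j ^ 2 = 1)
    (x : V → ℝ) :
    2 * (x ⬝ᵥ (G.signedLapMatrix σ *ᵥ x)) =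
      ∑ i, ∑ j, if G.Adj i j then (x i - σ i j * x j) ^ 2 else 0 := by
  have hswap : ∑ i, ∑ j, (if G.Adj i j then x j ^ 2 else 0) =
      ∑ i, ∑ j, (if G.Adj i j then x i ^ 2 else 0) := by
    rw [sum_comm]
    simp_rw [G.adj_comm]
  have hexpand : ∀ i j, (if G.Adj i j then (x i - σ i j * x j) ^ 2 else 0) =
      2 * (if G.Adj i j then x i * (x i - σ i j * x j) else 0) +
        ((if G.Adj i j then x j ^ 2 else 0) - (if G.Adj i j then x i ^ 2 else 0)) := by
    intro i j
    split_ifs with h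
    · linear_combination x j ^ 2 * hσ i j h
    · ring
  simp only [hexpand, sum_add_distrib, sum_sub_distrib, hswap, sub_self, add_zero, ← mul_sum,
    dotProduct_signedLapMatrix_mulVec]

theorem dotProduct_signedLapMatrix_mulVec_nonneg (hσ : ∀ i j, G.Adj i j → σ i j ^ 2 = 1)
    (x : V → ℝ) : 0 ≤ x ⬝ᵥ (G.signedLapMatrix σ *ᵥ x) := by
  rw [← mul_nonneg_iff_of_pos_left two_pos, G.two_mul_dotProduct_signedLapMatrix_mulVec hσ]
  positivity

theorem dotProduct_signedLapMatrix_mulVec_eq_zero_iff (hσ : ∀ i j, G.Adj i j → σ i j ^ 2 = 1)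
    (x : V → ℝ) :
    x ⬝ᵥ (G.signedLapMatrix σ *ᵥ x) = 0 ↔ ∀ i j, G.Adj i j → x i = σ i j * x j := by
  rw [← mul_eq_zero_iff_left two_ne_zero, G.two_mul_dotProduct_signedLapMatrix_mulVec hσ]
  simp (disch := intros; positivity) [sum_eq_zero_iff_of_nonneg, sub_eq_zero]

theorem signedLapMatrix_mulVec_eq_zero_iff (hσ : ∀ i j, G.Adj i j → σ i j ^ 2 = 1)
    (x : V → ℝ) :
    G.signedLapMatrix σ *ᵥ x = 0 ↔ ∀ i j, G.Adj i j → x i = σ i j * x j := by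
  refine ⟨fun h => ?_, fun h => funext fun i => ?_⟩
  · rw [← G.dotProduct_signedLapMatrix_mulVec_eq_zero_iff hσ, h, dotProduct_zero]
  · rw [signedLapMatrix_mulVec_apply, Pi.zero_apply]
    exact sum_eq_zero fun j _ => ite_eq_right_iff.mpr fun hij => sub_eq_zero.mpr (h i j hij)

theorem isHermitian_signedLapMatrix (hsym : ∀ i j, G.Adj i j → σ i j = σ j i) :
    (G.signedLapMatrix σ).IsHermitian := by
  ext i j
  rcases eq_or_ne i j with rfl | hne
  · rfl
  simp only [conjTranspose_apply, star_trivial, signedLapMatrix, if_neg hne, if_neg hne.symm,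
    G.adj_comm j]
  split_ifs with hij
  · rw [hsym i j hij]
  · rfl

theorem posSemidef_signedLapMatrix (hsym : ∀ i j, G.Adj i j → σ i j = σ j i)
    (hσ : ∀ i j, G.Adj i j → σ i j ^ 2 = 1) : (G.signedLapMatrix σ).PosSemidef :=
  .of_dotProduct_mulVec_nonneg (G.isHermitian_signedLapMatrix hsym) fun x => by
    simpa using G.dotProduct_signedLapMatrix_mulVec_nonneg hσ x

theorem det_signedLapMatrix_eq_zero_iff (hconn : G.Connected)
    (hσ : ∀ i j, G.Adj i j → σ i j ^ 2 = 1) :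
    (G.signedLapMatrix σ).det = 0 ↔ G.IsBalanced σ := by
  have := hconn.nonempty
  simp_rw [← exists_mulVec_eq_zero_iff, G.signedLapMatrix_mulVec_eq_zero_iff hσ]
  exact ⟨fun ⟨x, hx0, hx⟩ => hconn.isBalanced_of_forall_adj hσ hx0 hx,
    IsBalanced.exists_ne_zero_forall_adj⟩

theorem posDef_signedLapMatrix_iff (hconn : G.Connected)
    (hsym : ∀ i j, G.Adj i j → σ i j = σ j i) (hσ : ∀ i j, G.Adj i j → σ i j ^ 2 = 1) :
    (G.signedLapMatrix σ).PosDef ↔ ¬ G.IsBalanced σ :=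
  (G.posSemidef_signedLapMatrix hsym hσ).posDef_iff_det_ne_zero.trans
    (not_congr (G.det_signedLapMatrix_eq_zero_iff hconn hσ))

end SimpleGraph

/-- For a connected signed graph Γ, det L(Γ) = 0 iff Γ is balanced;
equivalently L(Γ) is positive definite iff Γ is unbalanced. -/
theorem stmt_7 {n : ℕ} (G : SimpleGraph (Fin n)) [DecidableRel G.Adj]
    (hconn : G.Connected)
    (σ : Fin n → Fin n → ℝ)
    (hσ : ∀ i j, G.Adj i j → σ i j = 1 ∨ σ i j = -1)
    (hsym : ∀ i j, σ i j = σ j i)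
    (L : Matrix (Fin n) (Fin n) ℝ)
    (hL : L = fun i j => (if i = j then (G.degree i : ℝ) else 0) -
      (if G.Adj i j then σ i j else 0)) :
    (L.det = 0 ↔ ∃ θ : Fin n → ℝ, (∀ v, θ v = 1 ∨ θ v = -1) ∧
        ∀ i j, G.Adj i j → σ i j = θ i * θ j) ∧
    (L.PosDef ↔ ¬ ∃ θ : Fin n → ℝ, (∀ v, θ v = 1 ∨ θ v = -1) ∧
        ∀ i j, G.Adj i j → σ i j = θ i * θ j) := by
  obtain rfl : L = G.signedLapMatrix σ := hL
  have hσsq : ∀ i j, G.Adj i j → σ i j ^ 2 = 1 := fun i j hij => by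
    rcases hσ i j hij with h | h <;> simp [h]
  exact ⟨G.det_signedLapMatrix_eq_zero_iff hconn hσsq,
    G.posDef_signedLapMatrix_iff hconn (fun i j _ => hsym i j) hσsq⟩
end

section
/- Let x = (x₁,…,xₙ) and y = (y₁,…,yₙ) be vectors of non-negative reals, both in non-increasing order, such that Σ_{i=1}^k xᵢ ≥ Σ_{i=1}^k yᵢ for every k = 1, …, n. Then for every real p > 1, ‖x‖_p ≥ ‖y‖_p, with equality if and only if x = y. -/
/-!
Since `t ↦ t ^ p` is strictly convex on `[0, ∞)`, `x i ^ p ≥ y i ^ p + p * y i ^ (p - 1) * (x i - y i)`,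
strictly where `x i ≠ y i`. It remains to see that `∑ i, p * y i ^ (p - 1) * (x i - y i) ≥ 0`, which
is Abel summation: the weights `p * y i ^ (p - 1)` are non-negative and non-increasing, and the
partial sums of `x - y` are non-negative by the majorization hypothesis.
-/

open Finset

theorem Finset.sum_mul_nonneg_of_antitoneOn {R ι : Type*} [Ring R] [PartialOrder R]
    [IsOrderedRing R] [LinearOrder ι] {s : Finset ι} {c d : ι → R}
    (hc : AntitoneOn c s) (hc0 : ∀ i ∈ s, 0 ≤ c i)
    (hd : ∀ k ∈ s, 0 ≤ ∑ i ∈ s with i ≤ k, d i) :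
    0 ≤ ∑ i ∈ s, c i * d i := by
  induction s using Finset.induction_on_max generalizing c with
  | empty => simp
  | insert a t hlt ih =>
    have ha : a ∉ t := fun h => (hlt a h).false
    have hca : ∀ i ∈ t, c a ≤ c i := fun i hi =>
      hc (mem_insert_of_mem hi) (mem_insert_self a t) (hlt i hi).le
    have hsplit : ∑ i ∈ insert a t, c i * d i
        = c a * ∑ i ∈ insert a t, d i + ∑ i ∈ t, (c i - c a) * d i := by
      simp only [sum_insert ha, sub_mul, sum_sub_distrib, mul_add, mul_sum]
      abel
    have htail : 0 ≤ ∑ i ∈ t, (c i - c a) * d i := by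
      refine ih (fun i hi j hj hij => sub_le_sub_right (hc (mem_insert_of_mem hi)
        (mem_insert_of_mem hj) hij) _) (fun i hi => sub_nonneg.2 (hca i hi)) fun k hk => ?_
      have := hd k (mem_insert_of_mem hk)
      rwa [filter_insert, if_neg (not_le.2 (hlt k hk))] at this
    have hfull : ∑ i ∈ insert a t with i ≤ a, d i = ∑ i ∈ insert a t, d i := by
      refine sum_congr (filter_true_of_mem fun i hi => ?_) fun _ _ => rfl
      rcases mem_insert.1 hi with rfl | hi
      exacts [le_rfl, (hlt i hi).le]
    rw [hsplit]
    exact add_nonneg (mul_nonneg (hc0 a (mem_insert_self a t))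
      (hfull ▸ hd a (mem_insert_self a t))) htail

theorem StrictConvexOn.add_mul_sub_lt_of_hasDerivAt {S : Set ℝ} {f : ℝ → ℝ} {f' x y : ℝ}
    (hf : StrictConvexOn ℝ S f) (hx : x ∈ S) (hy : y ∈ S) (hxy : x ≠ y)
    (hf' : HasDerivAt f f' x) : f x + f' * (y - x) < f y := by
  rcases hxy.lt_or_gt with hxy | hyx
  · have := hf.lt_slope_of_hasDerivAt hx hy hxy hf'
    rw [slope_def_field, lt_div_iff₀ (sub_pos.2 hxy)] at this
    linarith
  · have := hf.slope_lt_of_hasDerivWithinAt hy hx hyx hf'.hasDerivWithinAt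
    rw [slope_def_field, div_lt_iff₀ (sub_pos.2 hyx)] at this
    linarith

theorem sum_rpow_lt_sum_rpow_of_weakMajorizes {ι : Type*} [Fintype ι] [LinearOrder ι]
    [LocallyFiniteOrderBot ι] {x y : ι → ℝ} (hx0 : ∀ i, 0 ≤ x i) (hy0 : ∀ i, 0 ≤ y i)
    (hy : Antitone y) (hmaj : ∀ k, ∑ i ∈ Iic k, y i ≤ ∑ i ∈ Iic k, x i)
    {p : ℝ} (hp : 1 < p) (hxy : x ≠ y) :
    ∑ i, y i ^ p < ∑ i, x i ^ p := by
  have htangent (i : ι) (hi : y i ≠ x i) : y i ^ p + p * y i ^ (p - 1) * (x i - y i) < x i ^ p :=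
    (strictConvexOn_rpow hp).add_mul_sub_lt_of_hasDerivAt (hy0 i) (hx0 i) hi
      (Real.hasDerivAt_rpow_const (Or.inr hp.le))
  have habel : 0 ≤ ∑ i, p * y i ^ (p - 1) * (x i - y i) := by
    refine sum_mul_nonneg_of_antitoneOn (fun i _ j _ hij => ?_)
      (fun i _ => mul_nonneg (by linarith) (Real.rpow_nonneg (hy0 i) _)) fun k _ => ?_
    · exact mul_le_mul_of_nonneg_left
        (Real.rpow_le_rpow (hy0 j) (hy hij) (by linarith)) (by linarith)
    · rw [filter_ge_eq_Iic, sum_sub_distrib, sub_nonneg]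
      exact hmaj k
  obtain ⟨j, hj⟩ := Function.ne_iff.1 hxy
  have hlt : ∑ i, (y i ^ p + p * y i ^ (p - 1) * (x i - y i)) < ∑ i, x i ^ p := by
    refine sum_lt_sum (fun i _ => ?_) ⟨j, mem_univ j, htangent j (Ne.symm hj)⟩
    rcases eq_or_ne (y i) (x i) with h | h
    · simp [h]
    · exact (htangent i h).le
  rw [sum_add_distrib] at hlt
  linarith

theorem stmt_9_general {n : ℕ} (x y : Fin n → ℝ)
    (hx0 : ∀ i, 0 ≤ x i) (hy0 : ∀ i, 0 ≤ y i)
    (hymono : Antitone y)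
    (hmaj : ∀ k : Fin n, ∑ i ∈ Finset.Iic k, y i ≤ ∑ i ∈ Finset.Iic k, x i)
    (p : ℝ) (hp : 1 < p) :
    (∑ i, y i ^ p) ^ (1 / p) ≤ (∑ i, x i ^ p) ^ (1 / p) ∧
    ((∑ i, y i ^ p) ^ (1 / p) = (∑ i, x i ^ p) ^ (1 / p) ↔ x = y) := by
  have hpow : StrictMonoOn (fun s : ℝ => s ^ (1 / p)) (Set.Ici 0) :=
    Real.strictMonoOn_rpow_Ici_of_exponent_pos (by positivity)
  have hy : 0 ≤ ∑ i, y i ^ p := sum_nonneg fun i _ => Real.rpow_nonneg (hy0 i) p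
  have hlt (hxy : x ≠ y) : (∑ i, y i ^ p) ^ (1 / p) < (∑ i, x i ^ p) ^ (1 / p) := by
    have h := sum_rpow_lt_sum_rpow_of_weakMajorizes hx0 hy0 hymono hmaj hp hxy
    exact hpow hy (hy.trans h.le) h
  refine ⟨?_, fun h => not_not.1 fun hxy => (hlt hxy).ne h, fun h => h ▸ rfl⟩
  rcases eq_or_ne x y with rfl | hxy
  exacts [le_rfl, (hlt hxy).le]

/-- If x weakly majorizes y (both with non-negative, non-increasing entries),
then ‖x‖_p ≥ ‖y‖_p for every p > 1, with equality iff x = y. -/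
theorem stmt_9 {n : ℕ} (x y : Fin n → ℝ)
    (hx0 : ∀ i, 0 ≤ x i) (hy0 : ∀ i, 0 ≤ y i)
    (hxmono : Antitone x) (hymono : Antitone y)
    (hmaj : ∀ k : Fin n, ∑ i ∈ Finset.Iic k, y i ≤ ∑ i ∈ Finset.Iic k, x i)
    (p : ℝ) (hp : 1 < p) :
    (∑ i, y i ^ p) ^ (1 / p) ≤ (∑ i, x i ^ p) ^ (1 / p) ∧
    ((∑ i, y i ^ p) ^ (1 / p) = (∑ i, x i ^ p) ^ (1 / p) ↔ x = y) :=
  stmt_9_general x y hx0 hy0 hymono hmaj p hp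
end

section
/- Let Γ be a signed graph on n ≥ 3 vertices with m edges containing no balanced triangle, and suppose λ₁(Γ) ≥ |λₙ(Γ)| for the adjacency eigenvalues λ₁ ≥ ⋯ ≥ λₙ. Then λ₁(Γ)² + λ₂(Γ)² ≤ m. -/
/-!
Without balanced triangles every closed walk of length three contributes `0` or `-1` to
`tr A³`, so the eigenvalues satisfy `∑ λᵢ = 0`, `∑ λᵢ² = 2m` and `∑ λᵢ³ ≤ 0`. If `λ₂ < 0`, the
`n - 1 ≥ 2` numbers `-λᵢ` (`i ≥ 2`) are positive with sum `λ₁`, so the sum of their cubes is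
less than `λ₁³`, contradicting `∑ λᵢ³ ≤ 0`; hence `λ₂ ≥ 0`. With `a = λ₁`, `b = λ₂` and
`xᵢ = -λᵢ` for `i ≥ 3` we have `xᵢ ≤ a` (this is `λ₁ ≥ |λₙ|`) and `a³ + b³ ≤ ∑ xᵢ³`. By the
concavity of `t ↦ t^(2/3)` on `[0, a³]` this forces `a² + b² ≤ ∑ xᵢ²`, that is
`2 (λ₁² + λ₂²) ≤ ∑ λᵢ² = 2m`.
-/

open Matrix Polynomial Finset

theorem sum_pow_three_le_mul_sum_sq {ι : Type*} {s : Finset ι} {x : ι → ℝ} {c : ℝ}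
    (hx : ∀ i ∈ s, x i ≤ c) : ∑ i ∈ s, x i ^ 3 ≤ c * ∑ i ∈ s, x i ^ 2 := by
  rw [mul_sum]
  exact sum_le_sum fun i hi => by
    nlinarith [mul_le_mul_of_nonneg_right (hx i hi) (sq_nonneg (x i))]

theorem sum_pow_three_lt_pow_three_sum {ι : Type*} {s : Finset ι} {y : ι → ℝ}
    (hy : ∀ i ∈ s, 0 < y i) (hs : 1 < #s) : ∑ i ∈ s, y i ^ 3 < (∑ i ∈ s, y i) ^ 3 := by
  classical
  have hlt : ∀ i ∈ s, y i < ∑ j ∈ s, y j := fun i hi => by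
    rw [← add_sum_erase s y hi, lt_add_iff_pos_right]
    refine sum_pos (fun j hj => hy j (mem_of_mem_erase hj)) ?_
    rw [← card_pos, card_erase_of_mem hi]
    omega
  calc ∑ i ∈ s, y i ^ 3 < ∑ i ∈ s, (∑ j ∈ s, y j) ^ 2 * y i := by
        refine sum_lt_sum_of_nonempty (card_pos.1 (by omega)) fun i hi => ?_
        rw [pow_succ', mul_comm]
        exact mul_lt_mul_of_pos_right
          (pow_lt_pow_left₀ (hlt i hi) (hy i hi).le two_ne_zero) (hy i hi)
    _ = (∑ i ∈ s, y i) ^ 3 := by rw [← mul_sum]; ring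

theorem sq_add_sq_le_of_pow_three_add_le {a b u v : ℝ} (hb : 0 ≤ b) (hbv : b < v) (hvu : v ≤ u)
    (hua : u ≤ a) (h : a ^ 3 + b ^ 3 ≤ u ^ 3 + v ^ 3) : a ^ 2 + b ^ 2 ≤ u ^ 2 + v ^ 2 := by
  have hv : 0 < v := hb.trans_lt hbv
  have hu : 0 < u := hv.trans_le hvu
  have ha : 0 < a := hu.trans_le hua
  -- Dividing `(a - u)(a² + au + u²) ≤ (v - b)(v² + vb + b²)` by the ratios
  -- `(s² + st + t²) / (s + t)`, which are monotone in `s` and `t`, leaves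
  -- `(a - u)(a + u) ≤ (v - b)(v + b)`.
  have hmono : (v ^ 2 + v * b + b ^ 2) * (a + u) ≤ (a ^ 2 + a * u + u ^ 2) * (v + b) := by
    nlinarith [mul_nonneg (mul_nonneg ha.le hv.le) (sub_nonneg.2 (hvu.trans hua)),
      mul_nonneg (mul_nonneg ha.le hb) (sub_nonneg.2 (hbv.le.trans (hvu.trans hua))),
      mul_nonneg (mul_nonneg hu.le hv.le) (sub_nonneg.2 hvu),
      mul_nonneg (mul_nonneg hu.le hb) (sub_nonneg.2 (hbv.le.trans hvu)),
      mul_nonneg (mul_nonneg ha.le hv.le) (sub_nonneg.2 (hbv.le.trans hvu)),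
      mul_nonneg (mul_nonneg hu.le hb) (sub_nonneg.2 (hvu.trans hua))]
  refine le_of_mul_le_mul_left ?_ (by positivity : 0 < (a ^ 2 + a * u + u ^ 2) * (v + b))
  nlinarith [mul_nonneg (sub_nonneg.2 h) (by positivity : (0 : ℝ) ≤ (a + u) * (v + b)),
    mul_nonneg (sub_nonneg.2 hmono)
      (mul_nonneg (sub_nonneg.2 hbv.le) (by positivity : (0 : ℝ) ≤ v + b))]

theorem sq_add_sq_le_sq_add_of_pow_three_le {a b u R : ℝ} (hb : 0 ≤ b) (hba : b ≤ a) (hua : u ≤ a)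
    (hR : 0 ≤ R) (h : a ^ 3 + b ^ 3 ≤ u ^ 3 + b * R) : a ^ 2 + b ^ 2 ≤ u ^ 2 + R := by
  rcases hb.eq_or_lt with rfl | hb
  · have hau : a ≤ u := (Odd.strictMono_pow (by decide : Odd 3)).le_iff_le.1 (by simpa using h)
    nlinarith
  refine le_of_mul_le_mul_left ?_ hb
  rcases le_total b u with hbu | hub
  · nlinarith [mul_nonneg (sub_nonneg.2 hua)
      (mul_nonneg (sub_nonneg.2 (hbu.trans hua)) (by linarith : (0 : ℝ) ≤ a + u)), sq_nonneg u]
  · nlinarith [mul_nonneg (sq_nonneg u) (sub_nonneg.2 hub),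
      mul_nonneg (sq_nonneg a) (sub_nonneg.2 hba)]

theorem sq_add_sq_le_sq_add_sq_add_of_pow_three_le {a b u v R : ℝ} (hb : 0 ≤ b) (hbv : b < v)
    (hvu : v ≤ u) (hua : u ≤ a) (hR : 0 ≤ R) (h : a ^ 3 + b ^ 3 ≤ u ^ 3 + v ^ 3 + v * R) :
    a ^ 2 + b ^ 2 ≤ u ^ 2 + v ^ 2 + R := by
  by_cases hc : a ^ 3 + b ^ 3 ≤ u ^ 3 + v ^ 3
  · linarith [sq_add_sq_le_of_pow_three_add_le hb hbv hvu hua hc]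
  refine le_of_mul_le_mul_left ?_ (hb.trans_lt hbv)
  have hu : 0 ≤ u := hb.trans (hbv.le.trans hvu)
  -- `3 ((a³ - u³) - v (a² - u²)) ≥ a³ - u³ ≥ v³ - b³ ≥ 3 b² (v - b)`
  nlinarith [mul_nonneg (mul_nonneg (sub_nonneg.2 hua) (sub_nonneg.2 hua))
      (by linarith : (0 : ℝ) ≤ 2 * a + u),
    mul_nonneg (mul_nonneg (sub_nonneg.2 hua) (sub_nonneg.2 hvu)) (by linarith : (0 : ℝ) ≤ a + u),
    mul_nonneg (sq_nonneg (v - b)) (by linarith : (0 : ℝ) ≤ v + 2 * b)]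

theorem sq_add_sq_le_sum_sq {ι : Type*} {s : Finset ι} {x : ι → ℝ} {a b : ℝ} (hb : 0 ≤ b)
    (hba : b ≤ a) (hx : ∀ i ∈ s, x i ≤ a) (h : a ^ 3 + b ^ 3 ≤ ∑ i ∈ s, x i ^ 3) :
    a ^ 2 + b ^ 2 ≤ ∑ i ∈ s, x i ^ 2 := by
  classical
  rcases s.eq_empty_or_nonempty with rfl | hs
  · simpa using sq_add_sq_le_sq_add_of_pow_three_le hb hba (hb.trans hba) le_rfl (by simpa using h)
  -- Split off the largest term, and the second largest if it exceeds `b`; the remaining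
  -- terms then satisfy `x³ ≤ c x²` with `c = b`, resp. `c =` the second largest.
  obtain ⟨i, hi, hix⟩ := s.exists_max_image x hs
  rw [← add_sum_erase s _ hi] at h ⊢
  by_cases hrest : ∀ j ∈ s.erase i, x j ≤ b
  · exact sq_add_sq_le_sq_add_of_pow_three_le hb hba (hx i hi) (sum_nonneg fun _ _ => sq_nonneg _)
      (h.trans (by linarith [sum_pow_three_le_mul_sum_sq hrest]))
  simp only [not_forall, not_le] at hrest
  obtain ⟨j₀, hj₀, hbj₀⟩ := hrest
  obtain ⟨j, hj, hjx⟩ := (s.erase i).exists_max_image x ⟨j₀, hj₀⟩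
  rw [← add_sum_erase _ _ hj, ← add_assoc] at h ⊢
  refine sq_add_sq_le_sq_add_sq_add_of_pow_three_le hb (hbj₀.trans_le (hjx j₀ hj₀))
    (hix j (mem_of_mem_erase hj)) (hx i hi) (sum_nonneg fun _ _ => sq_nonneg _) ?_
  have := sum_pow_three_le_mul_sum_sq (s := (s.erase i).erase j) fun l hl =>
    hjx l (mem_of_mem_erase hl)
  linarith

theorem Antitone.apply_one_nonneg {k : ℕ} {μ : Fin (k + 3) → ℝ} (hμ : Antitone μ)
    (h1 : ∑ i, μ i = 0) (h3 : ∑ i, μ i ^ 3 ≤ 0) : 0 ≤ μ 1 := by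
  by_contra! hb
  have hpos : ∀ i ∈ (univ : Finset (Fin (k + 2))), 0 < -μ i.succ := fun i _ => by
    linarith [hμ (Fin.succ_zero_eq_one (n := k + 1) ▸ Fin.succ_le_succ_iff.2 (Fin.zero_le i))]
  have hlt := sum_pow_three_lt_pow_three_sum hpos (by simp)
  simp only [(by decide : Odd 3).neg_pow, sum_neg_distrib] at hlt
  rw [Fin.sum_univ_succ] at h1 h3
  rw [show ∑ i : Fin (k + 2), μ i.succ = -μ 0 by linarith, (by decide : Odd 3).neg_pow,
    neg_neg] at hlt
  linarith

theorem Antitone.two_mul_sq_add_sq_le_sum_sq {k : ℕ} {μ : Fin (k + 3) → ℝ} (hμ : Antitone μ)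
    (h1 : ∑ i, μ i = 0) (h3 : ∑ i, μ i ^ 3 ≤ 0) (hlast : |μ (Fin.last _)| ≤ μ 0) :
    2 * (μ 0 ^ 2 + μ 1 ^ 2) ≤ ∑ i, μ i ^ 2 := by
  have hlow : ∀ i, -μ 0 ≤ μ i := fun i => by
    linarith [neg_abs_le (μ (Fin.last _)), hμ (Fin.le_last i)]
  have hb := hμ.apply_one_nonneg h1 h3
  rw [Fin.sum_univ_succ, Fin.sum_univ_succ] at h3 ⊢
  simp only [Fin.succ_zero_eq_one] at h3 ⊢
  have key := sq_add_sq_le_sum_sq (s := univ) (x := fun i : Fin (k + 1) => -μ i.succ.succ) hb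
    (hμ (Fin.zero_le 1)) (fun i _ => by linarith [hlow i.succ.succ])
    (by simp only [(by decide : Odd 3).neg_pow, sum_neg_distrib]; linarith)
  simp only [even_two.neg_pow] at key
  linarith

theorem Matrix.IsHermitian.trace_pow {n 𝕜 : Type*} [Fintype n] [DecidableEq n] [RCLike 𝕜]
    {A : Matrix n n 𝕜} (hA : A.IsHermitian) (k : ℕ) :
    (A ^ k).trace = ∑ i, (hA.eigenvalues i : 𝕜) ^ k := by
  conv_lhs => rw [hA.spectral_theorem, ← map_pow, Unitary.conjStarAlgAut_apply, trace_mul_cycle,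
    Unitary.coe_star_mul_self, one_mul, diagonal_pow, trace_diagonal]
  simp

theorem Matrix.IsHermitian.sum_pow_eq_trace_pow {n 𝕜 : Type*} [Fintype n] [DecidableEq n]
    [RCLike 𝕜] {A : Matrix n n 𝕜} (hA : A.IsHermitian) {μ : n → 𝕜}
    (hμ : A.charpoly = ∏ i, (X - C (μ i))) (k : ℕ) : ∑ i, μ i ^ k = (A ^ k).trace := by
  have hroots : univ.val.map μ = univ.val.map (RCLike.ofReal ∘ hA.eigenvalues) := by
    rw [← hA.roots_charpoly_eq_eigenvalues, hμ,
      roots_prod _ _ (prod_ne_zero_iff.2 fun i _ => X_sub_C_ne_zero (μ i))]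
    simp
  simpa [Multiset.map_map, ← sum_eq_multiset_sum, ← hA.trace_pow] using
    congrArg (fun s => (s.map (· ^ k)).sum) hroots

def SimpleGraph.signedAdjMatrix_s13 {V : Type*} (G : SimpleGraph V) [DecidableRel G.Adj]
    (σ : V → V → ℝ) : Matrix V V ℝ :=
  of fun i j => if G.Adj i j then σ i j else 0

namespace SimpleGraph

variable {V : Type*} (G : SimpleGraph V) [DecidableRel G.Adj] {σ : V → V → ℝ}

@[simp]
theorem signedAdjMatrix_apply (σ : V → V → ℝ) (i j : V) :
    G.signedAdjMatrix_s13 σ i j = if G.Adj i j then σ i j else 0 := rfl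

theorem isHermitian_signedAdjMatrix (hsym : ∀ i j, σ i j = σ j i) :
    (G.signedAdjMatrix_s13 σ).IsHermitian := by
  ext i j
  simp [G.adj_comm, hsym]

theorem trace_signedAdjMatrix [Fintype V] (σ : V → V → ℝ) : (G.signedAdjMatrix_s13 σ).trace = 0 := by
  simp [Matrix.trace]

theorem trace_signedAdjMatrix_sq [Fintype V] [DecidableEq V]
    (hσ : ∀ i j, G.Adj i j → σ i j = 1 ∨ σ i j = -1) (hsym : ∀ i j, σ i j = σ j i) :
    (G.signedAdjMatrix_s13 σ ^ 2).trace = 2 * #G.edgeFinset := by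
  have hentry : ∀ i j, G.signedAdjMatrix_s13 σ i j * G.signedAdjMatrix_s13 σ j i =
      G.adjMatrix ℝ i j * G.adjMatrix ℝ j i := by
    intro i j
    by_cases h : G.Adj i j
    · rcases hσ i j h with hij | hij <;> simp [h, h.symm, ← hsym i j, hij]
    · simp [h, G.adj_comm]
  have hdiag : ∀ i, (G.signedAdjMatrix_s13 σ ^ 2) i i = G.degree i := by
    intro i
    rw [sq, mul_apply, ← G.adjMatrix_mul_self_apply_self, mul_apply]
    exact sum_congr rfl fun j _ => hentry i j
  simp_rw [Matrix.trace, Matrix.diag, hdiag]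
  exact_mod_cast G.sum_degrees_eq_twice_card_edges

theorem signedAdjMatrix_mul_mul_nonpos (hσ : ∀ i j, G.Adj i j → σ i j = 1 ∨ σ i j = -1)
    (hsym : ∀ i j, σ i j = σ j i)
    (htri : ¬ ∃ i j k, G.Adj i j ∧ G.Adj j k ∧ G.Adj i k ∧ σ i j * σ j k * σ i k = 1)
    (i j k : V) :
    G.signedAdjMatrix_s13 σ i j * G.signedAdjMatrix_s13 σ j k * G.signedAdjMatrix_s13 σ k i ≤ 0 := by
  by_cases hij : G.Adj i j
  · by_cases hjk : G.Adj j k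
    · by_cases hki : G.Adj k i
      · have hunbal : σ i j * σ j k * σ i k ≠ 1 := fun h => htri ⟨i, j, k, hij, hjk, hki.symm, h⟩
        have hprod : σ i j * σ j k * σ i k = -1 := by
          rcases hσ i j hij with h1 | h1 <;> rcases hσ j k hjk with h2 | h2 <;>
            rcases hσ i k hki.symm with h3 | h3 <;> simp_all
        simp [hij, hjk, hki, hsym k i, hprod]
      · simp [hki]
    · simp [hjk]
  · simp [hij]

theorem trace_signedAdjMatrix_pow_three_nonpos [Fintype V] [DecidableEq V]
    (hσ : ∀ i j, G.Adj i j → σ i j = 1 ∨ σ i j = -1) (hsym : ∀ i j, σ i j = σ j i)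
    (htri : ¬ ∃ i j k, G.Adj i j ∧ G.Adj j k ∧ G.Adj i k ∧ σ i j * σ j k * σ i k = 1) :
    (G.signedAdjMatrix_s13 σ ^ 3).trace ≤ 0 := by
  simp only [pow_succ, pow_zero, one_mul, Matrix.trace, Matrix.diag, mul_apply, sum_mul]
  exact sum_nonpos fun i _ => sum_nonpos fun k _ => sum_nonpos fun j _ =>
    G.signedAdjMatrix_mul_mul_nonpos hσ hsym htri i j k

end SimpleGraph

/-- If a signed graph on n ≥ 3 vertices and m edges has no balanced triangle
and λ₁ ≥ |λₙ|, then λ₁² + λ₂² ≤ m. -/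
theorem stmt_13 {n : ℕ} (hn : 3 ≤ n) (G : SimpleGraph (Fin n)) [DecidableRel G.Adj]
    (σ : Fin n → Fin n → ℝ)
    (hσ : ∀ i j, G.Adj i j → σ i j = 1 ∨ σ i j = -1)
    (hsym : ∀ i j, σ i j = σ j i)
    (A : Matrix (Fin n) (Fin n) ℝ)
    (hA : A = fun i j => if G.Adj i j then σ i j else 0)
    (μ : Fin n → ℝ) (hmono : Antitone μ)
    (hchar : A.charpoly = ∏ i, (X - C (μ i)))
    (htri : ¬ ∃ i j k : Fin n, G.Adj i j ∧ G.Adj j k ∧ G.Adj i k ∧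
      σ i j * σ j k * σ i k = 1)
    (hlam : |μ ⟨n - 1, by omega⟩| ≤ μ ⟨0, by omega⟩) :
    (μ ⟨0, by omega⟩) ^ 2 + (μ ⟨1, by omega⟩) ^ 2 ≤ (G.edgeFinset.card : ℝ) := by
  obtain ⟨k, rfl⟩ : ∃ k, n = k + 3 := ⟨n - 3, by omega⟩
  subst hA
  have hpow := (G.isHermitian_signedAdjMatrix hsym).sum_pow_eq_trace_pow hchar
  have h1 : ∑ i, μ i = 0 := by simpa [G.trace_signedAdjMatrix] using hpow 1
  have h2 := (hpow 2).trans (G.trace_signedAdjMatrix_sq hσ hsym)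
  have h3 := (hpow 3).trans_le (G.trace_signedAdjMatrix_pow_three_nonpos hσ hsym htri)
  have key := hmono.two_mul_sq_add_sq_le_sum_sq h1 h3 hlam
  show μ 0 ^ 2 + μ 1 ^ 2 ≤ _
  linarith
end

section
/- Let Γ = (G, σ) be a connected signed graph on n vertices with Laplacian eigenvalues μ₁ ≥ ⋯ ≥ μₙ and vertex degrees d₁ ≥ ⋯ ≥ dₙ. Then for every k with 1 ≤ k ≤ n − 1, the strict inequality Σ_{i=1}^k μᵢ(Γ) > Σ_{i=1}^k dᵢ(Γ) holds. -/
/-!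
Put `c = μ k` (the `(k+1)`-st largest eigenvalue) and split `L - c` by the functional calculus into
positive semidefinite parts `P - N`, with `P = (L - c)⁺`. Then `tr P = ∑_{i<k} μ i - k c`, while for
any set `S` of `k` vertices `∑_{v ∈ S} (L v v - c) = ∑_S P v v - ∑_S N v v ≤ tr P`. If the `k`
largest degrees reached the eigenvalue sum, equality would force `N` to vanish on the diagonal over
`S` and `P` to vanish on the diagonal off `S`; positive semidefiniteness then kills the entries of
`P` and `N`, hence of `L`, between `S` and its complement. Connectivity provides an edge leaving
`S`, where `L` has the nonzero entry `-σ a b`.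
-/

open Matrix Polynomial Finset

namespace Matrix

theorem trace_eq_sum_of_charpoly_eq_prod {ι κ R : Type*} [Fintype ι] [DecidableEq ι] [Fintype κ]
    [CommRing R] {A : Matrix ι ι R} {μ : κ → R} (h : A.charpoly = ∏ i, (X - C (μ i))) :
    A.trace = ∑ i, μ i := by
  rw [trace_eq_neg_charpoly_nextCoeff, h, prod_X_sub_C_nextCoeff, neg_neg]

namespace IsHermitian

variable {ι κ : Type*} [Fintype ι] [DecidableEq ι] [Fintype κ] {A : Matrix ι ι ℝ} {μ : κ → ℝ}

theorem map_eigenvalues_eq_of_charpoly_eq_prod (hA : A.IsHermitian)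
    (h : A.charpoly = ∏ i, (X - C (μ i))) :
    univ.val.map hA.eigenvalues = univ.val.map μ := by
  have hroots := hA.roots_charpoly_eq_eigenvalues
  rw [h, roots_prod _ _ (monic_prod_of_monic _ _ fun i _ => monic_X_sub_C _).ne_zero] at hroots
  simpa using hroots.symm

theorem trace_cfc_eq_sum_of_charpoly_eq_prod (hA : A.IsHermitian)
    (h : A.charpoly = ∏ i, (X - C (μ i))) (f : ℝ → ℝ) : (cfc f A).trace = ∑ i, f (μ i) := by
  rw [trace_eq_sum_of_charpoly_eq_prod (hA.charpoly_cfc_eq f)]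
  simpa [Multiset.map_map] using
    congrArg (fun s => (s.map f).sum) (hA.map_eigenvalues_eq_of_charpoly_eq_prod h)

end IsHermitian

namespace PosSemidef

variable {ι : Type*} [Fintype ι] [DecidableEq ι]

theorem apply_eq_zero_of_diag_eq_zero {A : Matrix ι ι ℝ} (hA : A.PosSemidef) {i : ι}
    (hi : A i i = 0) (j : ι) : A i j = 0 := by
  obtain ⟨B, rfl⟩ : ∃ B : Matrix ι ι ℝ, A = Bᴴ * B := by
    open scoped MatrixOrder in
    exact CStarAlgebra.nonneg_iff_eq_star_mul_self.mp hA.nonneg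
  simp only [mul_apply, conjTranspose_apply, star_trivial] at hi ⊢
  have hcol : ∀ l, B l i = 0 := fun l => mul_self_eq_zero.mp <|
    (sum_eq_zero_iff_of_nonneg fun l _ => mul_self_nonneg (B l i)).mp hi l (mem_univ l)
  simp [hcol]

theorem sub_apply_eq_zero_of_trace_le {P N : Matrix ι ι ℝ} (hP : P.PosSemidef)
    (hN : N.PosSemidef) {S : Finset ι} (h : P.trace ≤ ∑ v ∈ S, (P v v - N v v))
    {a b : ι} (ha : a ∈ S) (hb : b ∉ S) : P a b - N a b = 0 := by
  have hsplit : P.trace = ∑ v ∈ S, P v v + ∑ v ∈ Sᶜ, P v v := (sum_add_sum_compl S _).symm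
  have hPc : 0 ≤ ∑ v ∈ Sᶜ, P v v := sum_nonneg fun v _ => hP.diag_nonneg
  have hNS : 0 ≤ ∑ v ∈ S, N v v := sum_nonneg fun v _ => hN.diag_nonneg
  rw [sum_sub_distrib] at h
  have hNaa : N a a = 0 := (sum_eq_zero_iff_of_nonneg (f := fun v => N v v)
    fun v _ => hN.diag_nonneg).mp (by linarith) a ha
  have hPbb : P b b = 0 := (sum_eq_zero_iff_of_nonneg (f := fun v => P v v)
    fun v _ => hP.diag_nonneg).mp (by linarith) b (mem_compl.mpr hb)
  rw [← hP.isHermitian.apply a b, hP.apply_eq_zero_of_diag_eq_zero hPbb,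
    hN.apply_eq_zero_of_diag_eq_zero hNaa, star_zero, sub_zero]

end PosSemidef

end Matrix

theorem Antitone.sum_max_sub_eq {n : ℕ} {μ : Fin n → ℝ} (hμ : Antitone μ) (k : Fin n) :
    ∑ i, max (μ i - μ k) 0 = ∑ i ∈ Iio k, μ i - k * μ k := by
  rw [← sum_filter_add_sum_filter_not univ (· < k)]
  have hlt : ∀ i ∈ univ.filter (· < k), max (μ i - μ k) 0 = μ i - μ k := fun i hi =>
    max_eq_left (sub_nonneg.mpr (hμ (mem_filter.mp hi).2.le))
  have hge : ∀ i ∈ univ.filter (¬ · < k), max (μ i - μ k) 0 = 0 := fun i hi =>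
    max_eq_right (sub_nonpos.mpr (hμ (not_lt.mp (mem_filter.mp hi).2)))
  rw [sum_congr rfl hlt, sum_eq_zero hge, add_zero, sum_sub_distrib, sum_const, filter_gt_eq_Iio,
    Fin.card_Iio, nsmul_eq_mul]

open scoped MatrixOrder in
theorem Matrix.IsHermitian.apply_eq_zero_of_sum_eigenvalues_le_sum_diag {n : ℕ}
    {A : Matrix (Fin n) (Fin n) ℝ} (hA : A.IsHermitian) {μ : Fin n → ℝ} (hμ : Antitone μ)
    (hchar : A.charpoly = ∏ i, (X - C (μ i))) {k : Fin n} {S : Finset (Fin n)} (hS : #S = k)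
    (h : ∑ i ∈ Iio k, μ i ≤ ∑ v ∈ S, A v v) {a b : Fin n} (ha : a ∈ S) (hb : b ∉ S) :
    A a b = 0 := by
  set c := μ k
  set P := cfc (fun x => max (x - c) 0) A
  set N := cfc (fun x => max (c - x) 0) A
  have hP : P.PosSemidef := nonneg_iff_posSemidef.mp (cfc_nonneg fun x _ => le_max_right _ _)
  have hN : N.PosSemidef := nonneg_iff_posSemidef.mp (cfc_nonneg fun x _ => le_max_right _ _)
  have hPN : P - N = A + algebraMap ℝ _ (-c) := by
    have hsplit : (fun x => max (x - c) 0 - max (c - x) 0) = fun x => x + -c := by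
      funext x
      rcases le_total x c with hx | hx
      · rw [max_eq_right (by linarith), max_eq_left (by linarith)]; ring
      · rw [max_eq_left (by linarith), max_eq_right (by linarith)]; ring
    rw [← cfc_sub .., hsplit, cfc_add_const .., cfc_id' ..]
  have hPN_apply : ∀ i j, P i j - N i j = A i j - if i = j then c else 0 := fun i j => by
    simpa [algebraMap_matrix_apply, sub_eq_add_neg] using congrFun (congrFun hPN i) j
  have htrace : P.trace ≤ ∑ v ∈ S, (P v v - N v v) := by
    rw [hA.trace_cfc_eq_sum_of_charpoly_eq_prod hchar, hμ.sum_max_sub_eq]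
    simp only [hPN_apply, if_pos, sum_sub_distrib, sum_const, hS, nsmul_eq_mul]
    linarith
  have hab : a ≠ b := fun hab => hb (hab ▸ ha)
  simpa [hPN_apply, hab] using hP.sub_apply_eq_zero_of_trace_le hN htrace ha hb

theorem SimpleGraph.Preconnected.exists_adj_mem_notMem {V : Type*} {G : SimpleGraph V}
    (hG : G.Preconnected) {S : Set V} {u v : V} (hu : u ∈ S) (hv : v ∉ S) :
    ∃ a b, G.Adj a b ∧ a ∈ S ∧ b ∉ S := by
  obtain ⟨w⟩ := hG u v
  obtain ⟨x, -, hx⟩ := w.exists_boundary_dart S hu hv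
  exact ⟨x.fst, x.snd, x.adj, hx⟩

theorem stmt_15_general {n : ℕ} (G : SimpleGraph (Fin n)) [DecidableRel G.Adj]
    (hconn : G.Connected)
    (σ : Fin n → Fin n → ℝ)
    (hσ : ∀ i j, G.Adj i j → σ i j = 1 ∨ σ i j = -1)
    (hsym : ∀ i j, σ i j = σ j i)
    (L : Matrix (Fin n) (Fin n) ℝ)
    (hL : L = fun i j => (if i = j then (G.degree i : ℝ) else 0) -
      (if G.Adj i j then σ i j else 0))
    (μ : Fin n → ℝ) (hmono : Antitone μ)
    (hchar : L.charpoly = ∏ i, (X - C (μ i)))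
    (d : Fin n → ℕ)
    (e : Fin n ≃ Fin n) (hde : ∀ i, d i = G.degree (e i))
    (k : ℕ) (hk1 : 1 ≤ k) (hk2 : k ≤ n - 1) :
    ∑ i ∈ Finset.univ.filter (fun i : Fin n => (i : ℕ) < k), (d i : ℝ) <
      ∑ i ∈ Finset.univ.filter (fun i : Fin n => (i : ℕ) < k), μ i := by
  let K : Fin n := ⟨k, by omega⟩
  have hK : univ.filter (fun i : Fin n => (i : ℕ) < k) = Iio K := by ext; simp [Fin.lt_def, K]
  let S := (Iio K).map e.toEmbedding
  have hS : #S = K := by simp [S]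
  have hL_herm : L.IsHermitian := by
    refine IsHermitian.ext fun i j => ?_
    rcases eq_or_ne i j with rfl | hij
    · simp [hL]
    · simp [hL, hij, hij.symm, G.adj_comm j i, hsym j i]
  have hdeg : ∑ i ∈ Iio K, (d i : ℝ) = ∑ v ∈ S, L v v := by simp [S, hL, hde]
  obtain ⟨a, b, hab, ha, hb⟩ := hconn.preconnected.exists_adj_mem_notMem (S := (S : Set (Fin n)))
    (u := e ⟨0, by omega⟩) (v := e K) (by simp [S, Fin.lt_def, K]; omega) (by simp [S])
  rw [hK]
  by_contra! h
  have hLab := hL_herm.apply_eq_zero_of_sum_eigenvalues_le_sum_diag hmono hchar hS (hdeg ▸ h) ha hb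
  rcases hσ a b hab with hσab | hσab <;> simp [hL, G.ne_of_adj hab, hab, hσab] at hLab

/-- (Hou–Li–Pan conjecture) For a connected signed graph, for every
1 ≤ k ≤ n − 1, the sum of the k largest Laplacian eigenvalues is strictly
greater than the sum of the k largest vertex degrees. -/
theorem stmt_15 {n : ℕ} (G : SimpleGraph (Fin n)) [DecidableRel G.Adj]
    (hconn : G.Connected)
    (σ : Fin n → Fin n → ℝ)
    (hσ : ∀ i j, G.Adj i j → σ i j = 1 ∨ σ i j = -1)
    (hsym : ∀ i j, σ i j = σ j i)
    (L : Matrix (Fin n) (Fin n) ℝ)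
    (hL : L = fun i j => (if i = j then (G.degree i : ℝ) else 0) -
      (if G.Adj i j then σ i j else 0))
    (μ : Fin n → ℝ) (hmono : Antitone μ)
    (hchar : L.charpoly = ∏ i, (X - C (μ i)))
    (d : Fin n → ℕ) (hd : Antitone d)
    (e : Fin n ≃ Fin n) (hde : ∀ i, d i = G.degree (e i))
    (k : ℕ) (hk1 : 1 ≤ k) (hk2 : k ≤ n - 1) :
    ∑ i ∈ Finset.univ.filter (fun i : Fin n => (i : ℕ) < k), (d i : ℝ) <
      ∑ i ∈ Finset.univ.filter (fun i : Fin n => (i : ℕ) < k), μ i :=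
  stmt_15_general G hconn σ hσ hsym L hL μ hmono hchar d e hde k hk1 hk2
end

section
/- Let L be a symmetric positive semi-definite n×n real matrix written in block form L = [[B, C],[Cᵀ, D]] with B a k×k positive definite block and C a nonzero block. Then the sum of the k largest eigenvalues of L is strictly greater than trace(B). (Indeed L has the same nonzero eigenvalues as a matrix whose top-left k×k block is B + B^{−1/2} C Cᵀ B^{−1/2}, and trace(B^{−1/2} C Cᵀ B^{−1/2}) = trace(B^{−1} C Cᵀ) > 0.) -/
open Matrix Polynomial


lemma charpoly_isHermitian {n : Type*} [Fintype n] [DecidableEq n]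
    {A : Matrix n n ℝ} (hA : A.IsHermitian) :
    A.charpoly = ∏ i, (X - C (hA.eigenvalues i)) := by
  classical
  set U : Matrix n n ℝ := (hA.eigenvectorUnitary : Matrix n n ℝ) with hUdef
  obtain ⟨hU2, hU1⟩ : star U * U = 1 ∧ U * star U = 1 := Unitary.mem_iff.mp hA.eigenvectorUnitary.2
  have hsd : A = U * Matrix.diagonal hA.eigenvalues * star U := by
    have := hA.spectral_theorem
    simpa using this
  set φ : Matrix n n ℝ →+* Matrix n n ℝ[X] := (RingHom.mapMatrix (C : ℝ →+* ℝ[X]))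
  have key : charmatrix A = φ U * charmatrix (Matrix.diagonal hA.eigenvalues) * φ (star U) := by
    unfold charmatrix
    rw [mul_sub, sub_mul, ← _root_.map_mul, ← _root_.map_mul, ← hsd]
    congr 1
    have : φ U * Matrix.scalar n (X : ℝ[X]) = Matrix.scalar n (X : ℝ[X]) * φ U :=
      (Matrix.scalar_commute (X : ℝ[X]) (fun r => Commute.all _ _) (φ U)).symm
    rw [this, mul_assoc, ← _root_.map_mul, hU1, _root_.map_one, mul_one]
  have hdetU : (φ U).det * (φ (star U)).det = 1 := by
    rw [← det_mul, ← _root_.map_mul, hU1, _root_.map_one, det_one]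
  have hdiag : charmatrix (Matrix.diagonal hA.eigenvalues)
      = Matrix.diagonal (fun i => (X : ℝ[X]) - C (hA.eigenvalues i)) := by
    ext i j
    rcases eq_or_ne i j with rfl | h
    · simp
    · simp [charmatrix_apply_ne _ _ _ h, Matrix.diagonal_apply_ne _ h]
  calc A.charpoly = (φ U * charmatrix (Matrix.diagonal hA.eigenvalues) * φ (star U)).det := by
        rw [Matrix.charpoly, key]
    _ = (φ U).det * (charmatrix (Matrix.diagonal hA.eigenvalues)).det * (φ (star U)).det := by
        rw [det_mul, det_mul]
    _ = (charmatrix (Matrix.diagonal hA.eigenvalues)).det := by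
        rw [mul_comm (φ U).det, mul_assoc, hdetU, mul_one]
    _ = ∏ i, (X - C (hA.eigenvalues i)) := by rw [hdiag, det_diagonal]

-- multiset equality from product of (X - C a) equality
lemma multiset_eq_of_prod {ι κ : Type*} [Fintype ι] [Fintype κ] {f : ι → ℝ} {g : κ → ℝ}
    (h : ∏ i, (X - C (f i)) = ∏ j, (X - C (g j))) :
    Multiset.map f Finset.univ.val = Multiset.map g Finset.univ.val := by
  have h1 : ((Multiset.map f Finset.univ.val).map fun a => X - C a).prod
      = ((Multiset.map g Finset.univ.val).map fun a => X - C a).prod := by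
    rw [Multiset.map_map, Multiset.map_map]
    rw [← Finset.prod_eq_multiset_prod, ← Finset.prod_eq_multiset_prod]; exact h
  have := congrArg Polynomial.roots h1
  rwa [Polynomial.roots_multiset_prod_X_sub_C, Polynomial.roots_multiset_prod_X_sub_C] at this

lemma sum_comp_eq {ι κ : Type*} [Fintype ι] [Fintype κ] {f : ι → ℝ} {g : κ → ℝ}
    (h : Multiset.map f Finset.univ.val = Multiset.map g Finset.univ.val) (φ : ℝ → ℝ) :
    ∑ i, φ (f i) = ∑ j, φ (g j) := by
  have : (Multiset.map (φ ∘ f) Finset.univ.val).sum = (Multiset.map (φ ∘ g) Finset.univ.val).sum := by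
    rw [← Multiset.map_map, ← Multiset.map_map, h]
  rw [Finset.sum_eq_multiset_sum, Finset.sum_eq_multiset_sum]; exact this

lemma kyfan_aux {n k : ℕ} {ι : Type*} [Fintype ι] (μ : Fin n → ℝ) (hmono : Antitone μ)
    (d : ι → ℝ)
    (hmul : Multiset.map d Finset.univ.val = Multiset.map μ Finset.univ.val)
    (hk : k ≤ n) (hk0 : 0 < k)
    (c : ι → ℝ) (hc0 : ∀ j, 0 ≤ c j) (hc1 : ∀ j, c j ≤ 1) (hcs : ∑ j, c j = k) :
    ∑ j, d j * c j ≤ ∑ i ∈ Finset.univ.filter (fun i : Fin n => (i : ℕ) < k), μ i := by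
  have hkn : k - 1 < n := by omega
  set t : ℝ := μ ⟨k - 1, hkn⟩ with ht
  have step1 : ∑ j, d j * c j ≤ (∑ j, max (d j - t) 0) + t * k := by
    rw [← hcs, Finset.mul_sum, ← Finset.sum_add_distrib]
    refine Finset.sum_le_sum fun j _ => ?_
    have : d j * c j = (d j - t) * c j + t * c j := by ring
    rw [this]
    gcongr
    rcases le_or_gt (d j) t with h | h
    · exact le_trans (mul_nonpos_of_nonpos_of_nonneg (by linarith) (hc0 j)) (le_max_right _ _)
    · calc (d j - t) * c j ≤ (d j - t) * 1 := by
            apply mul_le_mul_of_nonneg_left (hc1 j) (by linarith)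
        _ ≤ max (d j - t) 0 := by rw [mul_one]; exact le_max_left _ _
  have step2 : (∑ j, max (d j - t) 0) = ∑ i : Fin n, max (μ i - t) 0 :=
    sum_comp_eq hmul (fun x => max (x - t) 0)
  have step3 : ∑ i : Fin n, max (μ i - t) 0
      = ∑ i ∈ Finset.univ.filter (fun i : Fin n => (i : ℕ) < k), (μ i - t) := by
    rw [← Finset.sum_filter_add_sum_filter_not Finset.univ (fun i : Fin n => (i : ℕ) < k)
      (fun i => max (μ i - t) 0)]
    have h1 : ∀ i ∈ Finset.univ.filter (fun i : Fin n => (i : ℕ) < k),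
        max (μ i - t) 0 = μ i - t := by
      intro i hi
      simp only [Finset.mem_filter] at hi
      have : μ i ≥ t := hmono (by simp [Fin.le_def]; omega)
      exact max_eq_left (by linarith)
    have h2 : ∀ i ∈ Finset.univ.filter (fun i : Fin n => ¬ (i : ℕ) < k),
        max (μ i - t) 0 = 0 := by
      intro i hi
      simp only [Finset.mem_filter] at hi
      have : μ i ≤ t := hmono (by simp [Fin.le_def]; omega)
      exact max_eq_right (by linarith)
    rw [Finset.sum_congr rfl h1, Finset.sum_congr rfl h2, Finset.sum_const_zero, add_zero]
  have hcard : (Finset.univ.filter (fun i : Fin n => (i : ℕ) < k)).card = k := by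
    have : Finset.univ.filter (fun i : Fin n => (i : ℕ) < k)
        = Finset.map (Fin.castLEEmb hk) Finset.univ := by
      ext i
      simp only [Finset.mem_filter, Finset.mem_map, Finset.mem_univ, true_and]
      constructor
      · intro hi; exact ⟨⟨i, hi⟩, rfl⟩
      · rintro ⟨j, rfl⟩; exact j.2
    rw [this, Finset.card_map, Finset.card_univ, Fintype.card_fin]
  calc ∑ j, d j * c j ≤ (∑ j, max (d j - t) 0) + t * k := step1
    _ = (∑ i ∈ Finset.univ.filter (fun i : Fin n => (i : ℕ) < k), (μ i - t)) + t * k := by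
        rw [step2, step3]
    _ = ∑ i ∈ Finset.univ.filter (fun i : Fin n => (i : ℕ) < k), μ i := by
        rw [Finset.sum_sub_distrib, Finset.sum_const, hcard, nsmul_eq_mul]
        ring

variable {ι : Type*} [Fintype ι] [DecidableEq ι]

local notation "⟪" x ", " y "⟫" => @inner ℝ _ _ x y

lemma quad_expand {L : Matrix ι ι ℝ} (hH : L.IsHermitian) (x : EuclideanSpace ℝ ι) :
    ⟪x, Matrix.toEuclideanLin L x⟫
      = ∑ j, hH.eigenvalues j * ⟪hH.eigenvectorBasis j, x⟫ ^ 2 := by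
  set T := Matrix.toEuclideanLin L with hT
  have hsym : T.IsSymmetric := (Matrix.isHermitian_iff_isSymmetric).1 hH
  have hbj : ∀ j, T (hH.eigenvectorBasis j) = hH.eigenvalues j • hH.eigenvectorBasis j :=
    fun j => congrArg (WithLp.equiv 2 (ι → ℝ)).symm (hH.mulVec_eigenvectorBasis j)
  rw [← hH.eigenvectorBasis.sum_inner_mul_inner x (T x)]
  refine Finset.sum_congr rfl fun j _ => ?_
  have h2 : ⟪hH.eigenvectorBasis j, T x⟫ = hH.eigenvalues j * ⟪hH.eigenvectorBasis j, x⟫ := by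
    rw [← hsym (hH.eigenvectorBasis j) x, hbj j, real_inner_smul_left]
  rw [h2, real_inner_comm x (hH.eigenvectorBasis j)]; ring

lemma exists_c {L : Matrix ι ι ℝ} (hH : L.IsHermitian)
    {m : ℕ} (q : Fin m → EuclideanSpace ℝ ι) (hq : Orthonormal ℝ q) :
    ∃ c : ι → ℝ, (∀ j, 0 ≤ c j) ∧ (∀ j, c j ≤ 1) ∧ (∑ j, c j = m) ∧
      ∑ i, ⟪q i, Matrix.toEuclideanLin L (q i)⟫ = ∑ j, hH.eigenvalues j * c j := by
  set b := hH.eigenvectorBasis with hb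
  have key : ∀ i : Fin m, ∑ j, ⟪b j, q i⟫ ^ 2 = 1 := by
    intro i
    have h := b.sum_inner_mul_inner (q i) (q i)
    have hn : ⟪q i, q i⟫ = 1 := by
      rw [real_inner_self_eq_norm_sq, hq.1 i, one_pow]
    rw [hn] at h
    rw [← h]
    refine Finset.sum_congr rfl fun j _ => ?_
    rw [real_inner_comm (q i) (b j)]; ring
  refine ⟨fun j => ∑ i, ⟪b j, q i⟫ ^ 2, fun j => Finset.sum_nonneg fun i _ => sq_nonneg _,
    fun j => ?_, ?_, ?_⟩
  · have hbn : ‖(b j : EuclideanSpace ℝ ι)‖ = 1 := b.orthonormal.1 j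
    have h := hq.sum_inner_products_le (b j) (s := Finset.univ)
    rw [hbn, one_pow] at h
    refine le_trans (le_of_eq ?_) h
    refine Finset.sum_congr rfl fun i _ => ?_
    rw [real_inner_comm, Real.norm_eq_abs, sq_abs]
  · rw [Finset.sum_comm, Finset.sum_congr rfl fun i (_ : i ∈ Finset.univ) => key i]
    simp
  · rw [Finset.sum_congr rfl fun i (_ : i ∈ Finset.univ) => quad_expand hH (q i),
      Finset.sum_comm]
    exact Finset.sum_congr rfl fun j _ => (Finset.mul_sum _ _ _).symm


set_option maxHeartbeats 1000000 in
/-- If L = [[B, C],[Cᵀ, D]] is positive semi-definite with B positive definite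
(k×k) and C ≠ 0, then the sum of the k largest eigenvalues of L strictly
exceeds trace(B). -/
theorem stmt_18 {k l : ℕ}
    (B : Matrix (Fin k) (Fin k) ℝ) (Cb : Matrix (Fin k) (Fin l) ℝ)
    (D : Matrix (Fin l) (Fin l) ℝ)
    (L : Matrix (Fin k ⊕ Fin l) (Fin k ⊕ Fin l) ℝ)
    (hLdef : L = Matrix.fromBlocks B Cb Cbᵀ D)
    (hL : L.PosSemidef) (hB : B.PosDef) (hC : Cb ≠ 0)
    (μ : Fin (k + l) → ℝ) (hmono : Antitone μ)
    (hchar : L.charpoly = ∏ i, (X - C (μ i))) :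
    B.trace < ∑ i ∈ Finset.univ.filter (fun i : Fin (k + l) => (i : ℕ) < k), μ i := by
  classical
  have hex : ∃ i j, Cb i j ≠ 0 := by
    by_contra h; push_neg at h; exact hC (by ext i j; simp [h])
  obtain ⟨i₀, j₀, hc0⟩ := hex
  have hk0 : 0 < k := i₀.pos
  have hH : L.IsHermitian := hL.1
  set d : (Fin k ⊕ Fin l) → ℝ := hH.eigenvalues with hd
  have hcharL : L.charpoly = ∏ j, (X - C (d j)) := charpoly_isHermitian hH
  have hmul : Multiset.map d Finset.univ.val = Multiset.map μ Finset.univ.val :=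
    multiset_eq_of_prod (hcharL.symm.trans hchar)
  set b0 : ℝ := B i₀ i₀ with hb0def
  set d0 : ℝ := D j₀ j₀ with hd0def
  set c0 : ℝ := Cb i₀ j₀ with hc0def
  have habs : 0 < |c0| := abs_pos.mpr hc0
  set ε : ℝ := min (1/2) (|c0| / (2 * (1 + |b0 - d0|))) with hεdef
  have habd : 0 ≤ |b0 - d0| := abs_nonneg _
  have hεpos : 0 < ε := lt_min (by norm_num) (by positivity)
  have hεhalf : ε ≤ 1/2 := min_le_left _ _
  have hεle : ε ≤ |c0| / (2 * (1 + |b0 - d0|)) := min_le_right _ _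
  set σ : ℝ := if 0 < c0 then (1:ℝ) else -1 with hσdef
  set s : ℝ := σ * ε with hsdef
  have hsc : s * c0 = ε * |c0| := by
    rcases lt_or_gt_of_ne hc0 with h | h
    · rw [hsdef, hσdef, if_neg (by linarith), abs_of_neg h]; ring
    · rw [hsdef, hσdef, if_pos h, abs_of_pos h]; ring
  have hs2 : s ^ 2 = ε ^ 2 := by
    rcases lt_or_gt_of_ne hc0 with h | h
    · rw [hsdef, hσdef, if_neg (by linarith)]; ring
    · rw [hsdef, hσdef, if_pos h]; ring
  set a : ℝ := Real.sqrt (1 - ε ^ 2) with hadef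
  have ha2 : a ^ 2 = 1 - ε ^ 2 := Real.sq_sqrt (by nlinarith)
  have hann : 0 ≤ a := Real.sqrt_nonneg _
  have ha : 1/2 ≤ a := by nlinarith
  -- the orthonormal family
  set e : (Fin k ⊕ Fin l) → EuclideanSpace ℝ (Fin k ⊕ Fin l) :=
    fun x => EuclideanSpace.single x 1 with hedef
  set q : Fin k → EuclideanSpace ℝ (Fin k ⊕ Fin l) :=
    fun i => if i = i₀ then a • e (Sum.inl i₀) + s • e (Sum.inr j₀) else e (Sum.inl i) with hqdef
  have hee : ∀ x y, ⟪e x, e y⟫ = if x = y then (1:ℝ) else 0 := by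
    intro x y
    rw [hedef]
    rw [EuclideanSpace.inner_single_left]
    simp [EuclideanSpace.single_apply]
  have hq : Orthonormal ℝ q := by
    rw [orthonormal_iff_ite]
    intro i j
    by_cases hi : i = i₀ <;> by_cases hj : j = i₀
    · subst hi; subst hj
      simp only [hqdef, if_pos rfl, inner_add_left, inner_add_right, real_inner_smul_left,
        real_inner_smul_right, hee, if_pos rfl]
      simp only [reduceCtorEq, if_false, if_true]
      nlinarith
    · subst hi
      have hij : i ≠ j := fun h => hj h.symm
      simp only [hqdef, if_pos rfl, if_neg hj, inner_add_left, real_inner_smul_left, hee]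
      have h1 : (Sum.inl i : Fin k ⊕ Fin l) ≠ Sum.inl j := by simpa using hij
      have h2 : (Sum.inr j₀ : Fin k ⊕ Fin l) ≠ Sum.inl j := by simp
      rw [if_neg h1, if_neg h2, if_neg hij]; ring
    · subst hj
      simp only [hqdef, if_pos rfl, if_neg hi, inner_add_right, real_inner_smul_right, hee]
      have h1 : (Sum.inl i : Fin k ⊕ Fin l) ≠ Sum.inl j := by simpa using hi
      have h2 : (Sum.inl i : Fin k ⊕ Fin l) ≠ Sum.inr j₀ := by simp
      simp
      exact fun h => absurd h hi
    · simp only [hqdef, if_neg hi, if_neg hj, hee]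
      by_cases h : i = j
      · subst h; simp
      · rw [if_neg (by simp [h]), if_neg h]
  -- quadratic form values
  set T := Matrix.toEuclideanLin L with hT
  have hTe : ∀ x y, ⟪e x, T (e y)⟫ = L x y := by
    intro x y
    have h1 : ⟪e x, T (e y)⟫ = (T (e y)) x := by
      simp [hedef, EuclideanSpace.inner_single_left]
    rw [h1]
    have h2 : (T (e y)) x = ∑ z, L x z * (e y) z := rfl
    rw [h2]
    simp [hedef, EuclideanSpace.single_apply]
  have hquad : ∀ i : Fin k, i ≠ i₀ → ⟪q i, T (q i)⟫ = B i i := by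
    intro i hi
    rw [hqdef]
    simp only [if_neg hi]
    rw [hTe]
    simp [hLdef]
  have hquad0 : ⟪q i₀, T (q i₀)⟫ = a^2*b0 + 2*(a*s)*c0 + s^2*d0 := by
    have hq0 : q i₀ = a • e (Sum.inl i₀) + s • e (Sum.inr j₀) := by
      rw [hqdef]; simp
    rw [hq0]
    simp only [map_add, _root_.map_smul, inner_add_left, inner_add_right,
      real_inner_smul_left, real_inner_smul_right, hTe]
    have e11 : L (Sum.inl i₀) (Sum.inl i₀) = b0 := by simp [hLdef, hb0def]
    have e12 : L (Sum.inl i₀) (Sum.inr j₀) = c0 := by simp [hLdef, hc0def]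
    have e21 : L (Sum.inr j₀) (Sum.inl i₀) = c0 := by simp [hLdef, hc0def, Matrix.transpose_apply]
    have e22 : L (Sum.inr j₀) (Sum.inr j₀) = d0 := by simp [hLdef, hd0def]
    rw [e11, e12, e21, e22]; ring
  -- lower bound
  have hlow : B.trace < ∑ i, ⟪q i, T (q i)⟫ := by
    have htr : B.trace = B i₀ i₀ + ∑ i ∈ Finset.univ.erase i₀, B i i := by
      rw [Matrix.trace]
      exact (Finset.add_sum_erase Finset.univ (fun i => B i i) (Finset.mem_univ i₀)).symm
    have hsq : ∑ i, ⟪q i, T (q i)⟫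
        = ⟪q i₀, T (q i₀)⟫ + ∑ i ∈ Finset.univ.erase i₀, ⟪q i, T (q i)⟫ :=
      (Finset.add_sum_erase Finset.univ _ (Finset.mem_univ i₀)).symm
    have hrest : ∑ i ∈ Finset.univ.erase i₀, ⟪q i, T (q i)⟫
        = ∑ i ∈ Finset.univ.erase i₀, B i i :=
      Finset.sum_congr rfl fun i hi => hquad i (Finset.ne_of_mem_erase hi)
    rw [htr, hsq, hrest, hquad0]
    have h2 : ε * |b0 - d0| ≤ |c0| / 2 := by
      have h3 : ε * |b0 - d0| ≤ (|c0| / (2 * (1 + |b0 - d0|))) * |b0 - d0| :=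
        mul_le_mul_of_nonneg_right hεle habd
      refine le_trans h3 ?_
      rw [div_mul_eq_mul_div, div_le_div_iff₀ (by positivity) (by norm_num)]
      nlinarith
    have h4 : d0 - b0 ≥ -|b0 - d0| := by
      rw [abs_sub_comm]; exact neg_abs_le _
    have g1 : a^2*b0 + 2*(a*s)*c0 + s^2*d0 - b0 = 2*a*(ε*|c0|) + ε^2*(d0-b0) := by
      have h1' : 2*(a*s)*c0 = 2*a*(ε*|c0|) := by
        have hr : 2*(a*s)*c0 = 2*a*(s*c0) := by ring
        rw [hr, hsc]
      rw [h1', hs2, ha2]; ring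
    have g2 : ε^2*(d0-b0) ≥ -(ε*|c0|/2) := by
      have t1 : ε^2*(-|b0-d0|) ≤ ε^2*(d0-b0) := mul_le_mul_of_nonneg_left h4 (sq_nonneg ε)
      have t2 : ε*(ε*|b0-d0|) ≤ ε*(|c0|/2) := mul_le_mul_of_nonneg_left h2 hεpos.le
      nlinarith
    have g3 : 1*(ε*|c0|) ≤ 2*a*(ε*|c0|) :=
      mul_le_mul_of_nonneg_right (by linarith : (1:ℝ) ≤ 2*a)
        (mul_nonneg hεpos.le (abs_nonneg _))
    have key : a^2*b0 + 2*(a*s)*c0 + s^2*d0 - b0 > 0 := by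
      rw [g1]
      have := mul_pos hεpos habs
      linarith
    linarith
  obtain ⟨c, hcnn, hc1, hcs, hsum⟩ := exists_c hH q hq
  have upper := kyfan_aux μ hmono d hmul (Nat.le_add_right k l) hk0 c hcnn hc1 hcs
  calc B.trace < ∑ i, ⟪q i, T (q i)⟫ := hlow
    _ = ∑ j, d j * c j := hsum
    _ ≤ _ := upper
end
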